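/- If a class 𝒞 of Baire spaces is closed under open subspaces and dense Baire subspaces, then every 𝒞-Piotrowski regular topological space X is strong 𝒞-Piotrowski (and hence a regular space is 𝒞-Piotrowski if and only if it is strong 𝒞-Piotrowski). -/

import Mathlib

open Topology Set

universe u v

/-- `f` is quasicontinuous at `x`. -/
def QuasiContinuousAt {X : Type*} {Y : Type*} [TopologicalSpace X] [TopologicalSpace Y]
    (f : X → Y) (x : X) : Prop :=
  ∀ Ox ∈ nhds x, ∀ Oy ∈ nhds (f x),
    ∃ U : Set X, IsOpen U ∧ U.Nonempty ∧ U ⊆ Ox ∧ f '' U ⊆ Oy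

/-- `f` is quasicontinuous. -/
def QuasiContinuous {X Y : Type*} [TopologicalSpace X] [TopologicalSpace Y] (f : X → Y) : Prop :=
  ∀ x, QuasiContinuousAt f x

/-- The set of continuity points of a map. -/
def ContinuityPoints {Z X : Type*} [TopologicalSpace Z] [TopologicalSpace X] (f : Z → X) :
    Set Z :=
  {z | ContinuousAt f z}

/-- A multivalued map (represented as `Φ : Z → Set X`) is usco if it has nonempty compact
values and is upper semicontinuous. -/
def IsUsco {Z X : Type*} [TopologicalSpace Z] [TopologicalSpace X] (Φ : Z → Set X) : Prop :=
  (∀ z, (Φ z).Nonempty) ∧ (∀ z, IsCompact (Φ z)) ∧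
    ∀ U : Set X, IsOpen U → IsOpen {z | Φ z ⊆ U}

/-- A minimal usco map. -/
def IsMinimalUsco {Z X : Type*} [TopologicalSpace Z] [TopologicalSpace X] (Φ : Z → Set X) :
    Prop :=
  IsUsco Φ ∧ ∀ Ψ : Z → Set X, IsUsco Ψ → (∀ z, Ψ z ⊆ Φ z) → Ψ = Φ

/-- `Φ` is single-valued at `z`. -/
def SingleValuedAt {Z X : Type*} (Φ : Z → Set X) (z : Z) : Prop := ∃ x, Φ z = {x}

/-- A class of topological spaces (in universe `u`). -/
def SpaceClass : Type (u + 1) := ∀ Z : Type u, TopologicalSpace Z → Prop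

/-- All members of the class are Baire spaces. -/
def IsBaireClass (P : SpaceClass.{u}) : Prop :=
  ∀ (Z : Type u) [tZ : TopologicalSpace Z], P Z tZ → BaireSpace Z

/-- The class is closed under taking open subspaces. -/
def ClosedUnderOpenSubspaces (P : SpaceClass.{u}) : Prop :=
  ∀ (Z : Type u) [tZ : TopologicalSpace Z], P Z tZ →
    ∀ U : Set Z, IsOpen U → P ↥U inferInstance

/-- The class is closed under taking dense `Gδ`-subspaces. -/
def ClosedUnderDenseGdelta (P : SpaceClass.{u}) : Prop :=
  ∀ (Z : Type u) [tZ : TopologicalSpace Z], P Z tZ →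
    ∀ S : Set Z, Dense S → IsGδ S → P ↥S inferInstance

/-- The class is closed under taking dense Baire subspaces. -/
def ClosedUnderDenseBaire (P : SpaceClass.{u}) : Prop :=
  ∀ (Z : Type u) [tZ : TopologicalSpace Z], P Z tZ →
    ∀ S : Set Z, Dense S → BaireSpace ↥S → P ↥S inferInstance

/-- `X` is `𝒞`-Piotrowski: every quasicontinuous map from a nonempty member of the class `𝒞`
to `X` has a continuity point. -/
def IsPiotrowskiFor (P : SpaceClass.{u}) (X : Type v) [TopologicalSpace X] : Prop :=
  ∀ (Z : Type u) [tZ : TopologicalSpace Z], P Z tZ → Nonempty Z →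
    ∀ f : Z → X, QuasiContinuous f → ∃ z, ContinuousAt f z

/-- `X` is strong `𝒞`-Piotrowski: for every quasicontinuous map from a member of `𝒞` to `X`
the set of continuity points is comeager. -/
def IsStrongPiotrowskiFor (P : SpaceClass.{u}) (X : Type v) [TopologicalSpace X] : Prop :=
  ∀ (Z : Type u) [tZ : TopologicalSpace Z], P Z tZ →
    ∀ f : Z → X, QuasiContinuous f → ContinuityPoints f ∈ residual Z

/-- `X` is `𝒞`-Stegall. -/
def IsStegallFor (P : SpaceClass.{u}) (X : Type v) [TopologicalSpace X] : Prop :=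
  ∀ (Z : Type u) [tZ : TopologicalSpace Z], P Z tZ → Nonempty Z →
    ∀ Φ : Z → Set X, IsMinimalUsco Φ → ∃ z, SingleValuedAt Φ z

/-- `X` is strong `𝒞`-Stegall. -/
def IsStrongStegallFor (P : SpaceClass.{u}) (X : Type v) [TopologicalSpace X] : Prop :=
  ∀ (Z : Type u) [tZ : TopologicalSpace Z], P Z tZ →
    ∀ Φ : Z → Set X, IsMinimalUsco Φ → {z | SingleValuedAt Φ z} ∈ residual Z

/-- The class of all Baire spaces (in universe `u`). -/
def BaireClass : SpaceClass.{u} := fun Z tZ => @BaireSpace Z tZ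

/-- `X` is Piotrowski. -/
def IsPiotrowski (X : Type v) [TopologicalSpace X] : Prop :=
  IsPiotrowskiFor BaireClass.{u} X

/-- `d` is a metric on `X` (not necessarily related to the topology of `X`). -/
structure IsMetric {X : Type*} (d : X → X → ℝ) : Prop where
  self : ∀ x, d x x = 0
  eq_of : ∀ x y, d x y = 0 → x = y
  symm : ∀ x y, d x y = d y x
  triangle : ∀ x y z, d x z ≤ d x y + d y z

/-- `X` is fragmented by `d`: every nonempty subset has a nonempty relatively open subset of
`d`-diameter `< ε`. -/
def FragmentedBy (X : Type*) [TopologicalSpace X] (d : X → X → ℝ) : Prop :=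
  ∀ ε : ℝ, 0 < ε → ∀ A : Set X, A.Nonempty →
    ∃ V : Set X, IsOpen V ∧ (A ∩ V).Nonempty ∧ ∀ x ∈ A ∩ V, ∀ y ∈ A ∩ V, d x y < ε

/-- The topology generated by `d` is finer than the topology of `X`. -/
def MetricTopFiner (X : Type*) [TopologicalSpace X] (d : X → X → ℝ) : Prop :=
  ∀ U : Set X, IsOpen U → ∀ x ∈ U, ∃ ε : ℝ, 0 < ε ∧ {y | d x y < ε} ⊆ U

/-- `X` is fragmentable. -/
def Fragmentable (X : Type*) [TopologicalSpace X] : Prop :=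
  ∃ d : X → X → ℝ, IsMetric d ∧ FragmentedBy X d

/-- `X` is strictly fragmented by the metric `d`. -/
def StrictlyFragmentedBy (X : Type*) [TopologicalSpace X] (d : X → X → ℝ) : Prop :=
  IsMetric d ∧ FragmentedBy X d ∧ MetricTopFiner X d

/-- `X` is strictly fragmentable. -/
def StrictlyFragmentable (X : Type*) [TopologicalSpace X] : Prop :=
  ∃ d : X → X → ℝ, StrictlyFragmentedBy X d

/-- The countable family `𝒰` separates the points of `S` from the points of `Sᶜ`:
some member of the family contains exactly one point of any pair `x ∈ S`, `y ∉ S`. -/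
def SeparatesFrom {K : Type*} (𝒰 : ℕ → Set K) (S : Set K) : Prop :=
  ∀ x ∈ S, ∀ y ∈ Sᶜ, ∃ n, (x ∈ 𝒰 n ∧ y ∉ 𝒰 n) ∨ (x ∉ 𝒰 n ∧ y ∈ 𝒰 n)

/-- `X` has countable separation: some compactification `K` of `X` carries a countable family
of open sets separating the points of (the copy of) `X` from the points of `K \ X`. -/
def HasCountableSeparation (X : Type u) [TopologicalSpace X] : Prop :=
  ∃ (K : Type u) (tK : TopologicalSpace K), @CompactSpace K tK ∧ @T2Space K tK ∧
    ∃ e : X → K, @Topology.IsEmbedding X K _ tK e ∧ @DenseRange K tK X e ∧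
      ∃ 𝒰 : ℕ → Set K, (∀ n, @IsOpen K tK (𝒰 n)) ∧ SeparatesFrom 𝒰 (Set.range e)

/-!
If the set `D` of discontinuity points of a quasicontinuous `f : Z → X` is not meagre, the
Banach category theorem gives a nonempty open `V` such that `D` is non-meagre in every nonempty
open subset of `V`. Then `D ∩ V` is a dense Baire subspace of the open subspace `V`, hence a
member of `𝒞`, and the restriction of `f` to it is still quasicontinuous. By regularity of `X`
and the local density of `D ∩ V`, a continuity point of this restriction is a continuity point of
`f`, which is absurd since it lies in `D`.
-/

open Filter

theorem exists_maximal_pairwiseDisjoint {ι α : Type*} [PartialOrder α] [OrderBot α]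
    (p : ι → Prop) (f : ι → α) :
    ∃ s : Set ι, Maximal (fun t => (∀ i ∈ t, p i) ∧ t.PairwiseDisjoint f) s := by
  refine zorn_subset _ fun c hc hchain => ⟨⋃₀ c, ⟨?_, ?_⟩, fun s hs => subset_sUnion_of_mem hs⟩
  · rintro i ⟨t, ht, hi⟩
    exact (hc ht).1 i hi
  · exact (pairwiseDisjoint_sUnion hchain.directedOn).2 fun t ht => (hc ht).2

section Meagre

variable {Z : Type*} [TopologicalSpace Z]

theorem exists_seq_isOpen_dense_iInter_subset {s : Set Z} (hs : s ∈ residual Z) :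
    ∃ G : ℕ → Set Z, (∀ n, IsOpen (G n)) ∧ (∀ n, Dense (G n)) ∧ ⋂ n, G n ⊆ s := by
  obtain ⟨S, hSo, hSd, hSc, hSs⟩ := mem_residual_iff.1 hs
  obtain ⟨G, hG⟩ := (hSc.insert univ).exists_eq_range (insert_nonempty univ S)
  have hGS (n : ℕ) : G n ∈ insert univ S := hG ▸ mem_range_self n
  refine ⟨G, fun n => ?_, fun n => ?_, ?_⟩
  · rcases hGS n with h | h
    · exact h ▸ isOpen_univ
    · exact hSo _ h
  · rcases hGS n with h | h
    · exact h ▸ dense_univ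
    · exact hSd _ h
  · rwa [← sInter_range, ← hG, sInter_insert, univ_inter]

theorem isMeagre_of_pairwiseDisjoint_of_dense_sUnion {A : Set Z} {𝒱 : Set (Set Z)}
    (hdisj : 𝒱.PairwiseDisjoint id) (hopen : ∀ V ∈ 𝒱, IsOpen V) (hdense : Dense (⋃₀ 𝒱))
    (hA : ∀ V ∈ 𝒱, IsMeagre (A ∩ V)) : IsMeagre A := by
  choose! G hGo hGd hGA using fun V hV => exists_seq_isOpen_dense_iInter_subset (hA V hV)
  set H : ℕ → Set Z := fun n => ⋃ V ∈ 𝒱, V ∩ G V n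
  have hHo (n : ℕ) : IsOpen (H n) :=
    isOpen_biUnion fun V hV => (hopen V hV).inter (hGo V hV n)
  have hHd (n : ℕ) : Dense (H n) := by
    refine (hdense.mono ?_).of_closure
    exact sUnion_subset fun V hV => ((hGd V hV n).open_subset_closure_inter (hopen V hV)).trans
      (closure_mono (subset_biUnion_of_mem (u := fun V => V ∩ G V n) hV))
  -- a point of `⋂ n, H n` lies in a single member `V` of the disjoint family, for every `n`
  have hHA : ⋂ n, H n ⊆ Aᶜ := by
    intro z hz hzA
    obtain ⟨V, hV, hzV, -⟩ := mem_iUnion₂.1 (mem_iInter.1 hz 0)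
    refine hGA V hV (mem_iInter.2 fun n => ?_) ⟨hzA, hzV⟩
    obtain ⟨W, hW, hzW, hzG⟩ := mem_iUnion₂.1 (mem_iInter.1 hz n)
    rwa [hdisj.elim hV hW (not_disjoint_iff.2 ⟨z, hzV, hzW⟩)]
  exact mem_of_superset
    (countable_iInter_mem.2 fun n => residual_of_dense_open (hHo n) (hHd n)) hHA

/-- The Banach category theorem, in its local form. -/
theorem isMeagre_of_forall_exists_isMeagre_inter {A : Set Z}
    (h : ∀ V, IsOpen V → V.Nonempty → ∃ U ⊆ V, IsOpen U ∧ U.Nonempty ∧ IsMeagre (A ∩ U)) :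
    IsMeagre A := by
  obtain ⟨𝒱, ⟨h𝒱, hdisj⟩, hmax⟩ :=
    exists_maximal_pairwiseDisjoint (fun V : Set Z => IsOpen V ∧ IsMeagre (A ∩ V)) id
  refine isMeagre_of_pairwiseDisjoint_of_dense_sUnion hdisj (fun V hV => (h𝒱 V hV).1) ?_
    (fun V hV => (h𝒱 V hV).2)
  refine dense_iff_inter_open.2 fun O hO hOne => ?_
  by_contra hO𝒱
  obtain ⟨U, hUO, hU, hUne, hAU⟩ := h O hO hOne
  have hU𝒱 : U ∈ 𝒱 := by
    refine hmax ⟨forall_mem_insert.2 ⟨⟨hU, hAU⟩, h𝒱⟩, pairwiseDisjoint_insert.2 ⟨hdisj, ?_⟩⟩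
      (subset_insert U 𝒱) (mem_insert U 𝒱)
    exact fun V hV _ => disjoint_left.2 fun z hzU hzV => hO𝒱 ⟨z, hUO hzU, V, hV, hzV⟩
  exact hO𝒱 (hUne.mono (subset_inter hUO (subset_sUnion_of_mem hU𝒱)))

theorem exists_isOpen_forall_not_isMeagre_inter {A : Set Z} (hA : ¬IsMeagre A) :
    ∃ V, IsOpen V ∧ V.Nonempty ∧ ∀ U ⊆ V, IsOpen U → U.Nonempty → ¬IsMeagre (A ∩ U) := by
  by_contra! h
  exact hA (isMeagre_of_forall_exists_isMeagre_inter h)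

theorem IsOpen.subset_closure_inter_of_forall_not_isMeagre_inter {A V : Set Z} (hV : IsOpen V)
    (h : ∀ U ⊆ V, IsOpen U → U.Nonempty → ¬IsMeagre (A ∩ U)) : V ⊆ closure (A ∩ V) :=
  fun v hv => mem_closure_iff.2 fun U hU hvU => inter_left_comm U A V ▸
    nonempty_of_not_isMeagre (h (U ∩ V) inter_subset_right (hU.inter hV) ⟨v, hvU, hv⟩)

theorem BaireSpace.of_forall_not_isMeagre
    (h : ∀ U : Set Z, IsOpen U → U.Nonempty → ¬IsMeagre U) : BaireSpace Z where
  baire_property G hGo hGd := by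
    refine dense_iff_inter_open.2 fun U hU hUne => ?_
    by_contra hempty
    refine h U hU hUne (mem_of_superset
      (countable_iInter_mem.2 fun n => residual_of_dense_open (hGo n) (hGd n)) ?_)
    exact fun z hz hzU => hempty ⟨z, hzU, hz⟩

theorem Topology.IsInducing.baireSpace_of_forall_not_isMeagre_inter {C : Type*}
    [TopologicalSpace C] {ι : C → Z} (hι : IsInducing ι)
    (h : ∀ U, IsOpen U → (range ι ∩ U).Nonempty → ¬IsMeagre (range ι ∩ U)) : BaireSpace C := by
  refine BaireSpace.of_forall_not_isMeagre fun W hW hWne hWm => ?_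
  obtain ⟨U, hU, rfl⟩ := hι.isOpen_iff.1 hW
  have hU' := h U hU
  rw [← image_preimage_eq_range_inter] at hU'
  exact hU' (hWne.image ι) (hι.isMeagre_image hWm)

end Meagre

section Quasicontinuity

variable {Z X C : Type*} [TopologicalSpace Z]

theorem exists_apply_mem_of_subset_closure_range {ι : C → Z} {U : Set Z} (hU : IsOpen U)
    (hUne : U.Nonempty) (hsub : U ⊆ closure (range ι)) : ∃ c, ι c ∈ U := by
  obtain ⟨_, ⟨c, rfl⟩, hc⟩ :=
    (closure_inter_open_nonempty_iff hU).1 (hUne.mono (subset_inter hsub subset_rfl))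
  exact ⟨c, hc⟩

variable [TopologicalSpace X] [TopologicalSpace C]

theorem QuasiContinuous.comp_isInducing {f : Z → X} (hf : QuasiContinuous f) {ι : C → Z}
    (hι : IsInducing ι) (hd : range ι ⊆ interior (closure (range ι))) :
    QuasiContinuous (f ∘ ι) := by
  intro c O hO Oy hOy
  obtain ⟨t, ht, htO⟩ := mem_comap.1 (hι.nhds_eq_comap c ▸ hO)
  obtain ⟨U, hU, hUne, hUt, hfU⟩ :=
    hf (ι c) _ (inter_mem ht (isOpen_interior.mem_nhds (hd ⟨c, rfl⟩))) Oy hOy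
  obtain ⟨c', hc'⟩ := exists_apply_mem_of_subset_closure_range hU hUne
    fun z hz => interior_subset (hUt hz).2
  refine ⟨ι ⁻¹' U, hU.preimage hι.continuous, ⟨c', hc'⟩, fun d hd => htO (hUt hd).1, ?_⟩
  rw [image_comp]
  exact (image_mono (image_preimage_subset ι U)).trans hfU

theorem QuasiContinuous.continuousAt_of_continuousAt_comp [RegularSpace X] {f : Z → X}
    (hf : QuasiContinuous f) {ι : C → Z} (hι : IsInducing ι)
    (hd : range ι ⊆ interior (closure (range ι))) {c : C} (hc : ContinuousAt (f ∘ ι) c) :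
    ContinuousAt f (ι c) := by
  refine (closed_nhds_basis _).tendsto_right_iff.2 fun H ⟨hH, hHc⟩ => ?_
  obtain ⟨t, ht, htH⟩ := mem_comap.1 (hι.nhds_eq_comap c ▸ hc hH)
  filter_upwards [interior_mem_nhds.2 ht, isOpen_interior.mem_nhds (hd ⟨c, rfl⟩)]
    with z hzt hzd
  by_contra hzH
  obtain ⟨U, hU, hUne, hUt, hfU⟩ := hf z _ (inter_mem (isOpen_interior.mem_nhds hzt)
    (isOpen_interior.mem_nhds hzd)) Hᶜ (hHc.isOpen_compl.mem_nhds hzH)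
  obtain ⟨c', hc'⟩ := exists_apply_mem_of_subset_closure_range hU hUne
    fun w hw => interior_subset (hUt hw).2
  exact hfU ⟨ι c', hc', rfl⟩ (htH (show ι c' ∈ t from interior_subset (hUt hc').1))

end Quasicontinuity

theorem IsPiotrowskiFor.continuityPoints_mem_residual {P : SpaceClass.{u}}
    (hO : ClosedUnderOpenSubspaces P) (hD : ClosedUnderDenseBaire P) {X : Type v}
    [TopologicalSpace X] [RegularSpace X] (hP : IsPiotrowskiFor P X) {Z : Type u}
    [TopologicalSpace Z] (hZ : P Z ‹_›) {f : Z → X} (hf : QuasiContinuous f) :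
    ContinuityPoints f ∈ residual Z := by
  by_contra hcont
  obtain ⟨V, hV, hVne, hDV⟩ := exists_isOpen_forall_not_isMeagre_inter
    (by rwa [IsMeagre, compl_compl] : ¬IsMeagre (ContinuityPoints f)ᶜ)
  let S : Set V := Subtype.val ⁻¹' (ContinuityPoints f)ᶜ
  let ι : S → Z := Subtype.val ∘ Subtype.val
  have hι : IsInducing ι := IsInducing.subtypeVal.comp IsInducing.subtypeVal
  have hrange : range ι = (ContinuityPoints f)ᶜ ∩ V := by
    ext z
    simp [ι, S, and_comm]
  have hVcl : V ⊆ closure (range ι) :=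
    hrange ▸ hV.subset_closure_inter_of_forall_not_isMeagre_inter hDV
  have hd : range ι ⊆ interior (closure (range ι)) := fun z hz =>
    interior_maximal hVcl hV (by rw [hrange] at hz; exact hz.2)
  have hSdense : Dense S := by
    rw [Subtype.dense_iff]
    simpa [ι, range_comp] using hVcl
  have hSbaire : BaireSpace S := hι.baireSpace_of_forall_not_isMeagre_inter fun U hU hne => by
    rw [hrange, inter_assoc] at hne ⊢
    exact hDV _ inter_subset_left (hV.inter hU) (hne.mono inter_subset_right)
  obtain ⟨s, -⟩ := exists_apply_mem_of_subset_closure_range hV hVne hVcl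
  obtain ⟨c, hc⟩ := hP S (hD V (hO Z hZ V hV) S hSdense hSbaire) ⟨s⟩ (f ∘ ι)
    (hf.comp_isInducing hι hd)
  exact c.2 (hf.continuousAt_of_continuousAt_comp hι hd hc)

/-- If a class `𝒞` (= `P`) of Baire spaces is closed under open subspaces
and dense Baire subspaces, then a regular space `X` is `𝒞`-Piotrowski if and only if it is
strong `𝒞`-Piotrowski. -/
theorem piotrowski_iff_strongPiotrowski (P : SpaceClass.{u}) (hB : IsBaireClass P)
    (hO : ClosedUnderOpenSubspaces P) (hD : ClosedUnderDenseBaire P)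
    (X : Type v) [TopologicalSpace X] [RegularSpace X] :
    IsPiotrowskiFor P X ↔ IsStrongPiotrowskiFor P X := by
  refine ⟨fun hP Z _ hZ f hf => hP.continuityPoints_mem_residual hO hD hZ hf,
    fun hS Z _ hZ _ f hf => ?_⟩
  have := hB Z hZ
  exact (dense_of_mem_residual (hS Z hZ f hf)).nonempty
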